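/- arXiv:math/0504559 — 5 statements merged into one kernel-verified Lean document; each statement's English description precedes it below -/
import Mathlib

section
/- Let γ be a positive real number. The sum over all multi-indices α = (α_i^k)_{i,k≥1} with nonnegative integer entries and finitely many nonzero entries of the product ∏_{i,k≥1} (2ik)^{-γ α_i^k} converges if and only if γ > 1. -/
/-! With `w p = (2 (p.1+1) (p.2+1))^(-γ) < 1`, the summand is `∏ p, w p ^ α p`. Such a family
of products over multi-indices is summable iff `w` is: the multi-indices `single p 1` recover
`w`, and conversely, encoding `α` by its graph `{(p, α p)}` turns the summand into a product
over a finite subset of `ι × ℕ` of the summable weights `(p, n) ↦ w p ^ n` (`n ≥ 1`), whose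
row sums are `w p / (1 - w p)`. Finally `∑ (2ik)^(-γ) = 2^(-γ) (∑ i^(-γ))²` is finite iff
`γ > 1`. -/

theorem Real.summable_nat_add_one_rpow_neg_iff {s : ℝ} :
    Summable (fun n : ℕ => ((n : ℝ) + 1) ^ (-s)) ↔ 1 < s := by
  rw [← neg_lt_neg_iff, ← Real.summable_nat_rpow,
    ← summable_nat_add_iff 1 (f := fun n : ℕ => (n : ℝ) ^ (-s))]
  simp only [Nat.cast_add, Nat.cast_one]

theorem summable_ite_pow_of_summable {ι : Type*} {w : ι → ℝ} (h0 : ∀ i, 0 ≤ w i)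
    (h1 : ∀ i, w i < 1) (hw : Summable w) :
    Summable (fun x : ι × ℕ => if x.2 = 0 then 0 else w x.1 ^ x.2) := by
  have hnonneg : ∀ x : ι × ℕ, 0 ≤ if x.2 = 0 then 0 else w x.1 ^ x.2 := fun x => by
    have := h0 x.1
    positivity
  have hrow : ∀ i, Summable (fun n : ℕ => if n = 0 then 0 else w i ^ n) := fun i =>
    (summable_geometric_of_lt_one (h0 i) (h1 i)).of_nonneg_of_le (fun n => hnonneg (i, n))
      fun n => by split_ifs <;> simp [pow_nonneg (h0 i)]
  have hrow_tsum : ∀ i, ∑' n : ℕ, (if n = 0 then 0 else w i ^ n) = w i * (1 - w i)⁻¹ := by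
    intro i
    rw [(hrow i).tsum_eq_zero_add]
    simp only [if_pos, Nat.succ_ne_zero, if_false, pow_succ', tsum_mul_left,
      tsum_geometric_of_lt_one (h0 i) (h1 i), zero_add]
  refine (summable_prod_of_nonneg hnonneg).2 ⟨hrow, ?_⟩
  simp only [hrow_tsum]
  -- `w i ≤ 1/2` for all but finitely many `i`, and there `w i / (1 - w i) ≤ 2 w i`.
  refine (hw.mul_left 2).of_norm_bounded_eventually ?_
  filter_upwards [hw.tendsto_cofinite_zero.eventually (gt_mem_nhds one_half_pos)] with i hi
  have hpos : 0 < 1 - w i := by linarith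
  rw [Real.norm_of_nonneg (mul_nonneg (h0 i) (inv_nonneg.2 hpos.le)), ← div_eq_mul_inv,
    div_le_iff₀ hpos]
  nlinarith [h0 i]

theorem Finsupp.summable_prod_pow_iff {ι : Type*} {w : ι → ℝ} (h0 : ∀ i, 0 ≤ w i)
    (h1 : ∀ i, w i < 1) :
    Summable (fun α : ι →₀ ℕ => ∏ i ∈ α.support, w i ^ α i) ↔ Summable w := by
  constructor
  · intro h
    refine (h.comp_injective (Finsupp.single_left_injective one_ne_zero)).congr fun i => ?_
    simp
  · intro hw
    refine ((summable_finsetProd_of_summable_nonneg (fun x => by have := h0 x.1; positivity)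
      (summable_ite_pow_of_summable h0 h1 hw)).comp_injective
        (Finsupp.graph_injective ι ℕ)).congr fun α => ?_
    simp only [Function.comp_apply, Finsupp.graph, Finset.prod_map]
    exact Finset.prod_congr rfl fun i hi => if_neg (Finsupp.mem_support_iff.1 hi)

theorem summable_two_mul_succ_mul_succ_rpow_neg_iff {s : ℝ} :
    Summable (fun p : ℕ × ℕ => ((2 * (p.1 + 1) * (p.2 + 1) : ℝ)) ^ (-s)) ↔ 1 < s := by
  have hsplit : ∀ p : ℕ × ℕ, ((2 * (p.1 + 1) * (p.2 + 1) : ℝ)) ^ (-s) =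
      (2 : ℝ) ^ (-s) * (((p.1 : ℝ) + 1) ^ (-s) * ((p.2 : ℝ) + 1) ^ (-s)) := fun p => by
    rw [Real.mul_rpow (by positivity) (by positivity), Real.mul_rpow (by positivity) (by positivity),
      mul_assoc]
  simp only [hsplit, summable_mul_left_iff (Real.rpow_pos_of_pos two_pos (-s)).ne']
  constructor
  · intro h
    exact Real.summable_nat_add_one_rpow_neg_iff.1 (by simpa using h.prod_factor 0)
  · intro hs
    have h := Real.summable_nat_add_one_rpow_neg_iff.2 hs
    exact h.mul_of_nonneg h (fun n => by positivity) (fun n => by positivity)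

/-- For γ > 0, the sum over all multi-indices α = (α_i^k)_{i,k≥1}
(nonnegative integers, finitely many nonzero) of ∏_{i,k≥1} (2ik)^{-γ α_i^k}
converges if and only if γ > 1.  A multi-index is encoded as a finitely supported
function `(ℕ × ℕ) →₀ ℕ`, the pair `p = (i-1, k-1)` representing indices `i = p.1+1 ≥ 1`,
`k = p.2+1 ≥ 1`. -/
theorem stmt0 (γ : ℝ) (hγ : 0 < γ) :
    Summable (fun α : (ℕ × ℕ) →₀ ℕ =>
      ∏ p ∈ α.support,
        ((2 * (p.1 + 1) * (p.2 + 1) : ℝ)) ^ (-(γ * (α p : ℝ)))) ↔ 1 < γ := by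
  set w : ℕ × ℕ → ℝ := fun p => ((2 * (p.1 + 1) * (p.2 + 1) : ℝ)) ^ (-γ)
  have hbase : ∀ p : ℕ × ℕ, (1 : ℝ) < 2 * (p.1 + 1) * (p.2 + 1) := fun p => by
    have : (1 : ℝ) ≤ (p.1 + 1) * (p.2 + 1) := one_le_mul_of_one_le_of_one_le
      (by linarith [p.1.cast_nonneg (α := ℝ)]) (by linarith [p.2.cast_nonneg (α := ℝ)])
    linarith
  have hterm : ∀ α : (ℕ × ℕ) →₀ ℕ,
      ∏ p ∈ α.support, ((2 * (p.1 + 1) * (p.2 + 1) : ℝ)) ^ (-(γ * (α p : ℝ))) =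
        ∏ p ∈ α.support, w p ^ α p := fun α =>
    Finset.prod_congr rfl fun p _ => by
      rw [← Real.rpow_natCast, ← Real.rpow_mul (by linarith [hbase p]), neg_mul]
  rw [summable_congr hterm,
    Finsupp.summable_prod_pow_iff (fun p => by positivity)
      (fun p => Real.rpow_lt_one_of_one_lt_of_neg (hbase p) (neg_lt_zero.2 hγ)),
    summable_two_mul_succ_mul_succ_rpow_neg_iff]
end

section
/- Let ξ be a standard Gaussian random variable and H_n the Hermite polynomials defined by H_n(t) = (-1)^n e^{t²/2} (d^n/dt^n) e^{-t²/2}. For nonnegative integers a, b, c, the expectation E[H_a(ξ)H_b(ξ)H_c(ξ)] equals a!b!c! / (((a+b-c)/2)! ((a-b+c)/2)! ((-a+b+c)/2)!) if a+b+c is even and |a-b| ≤ c ≤ a+b, and equals 0 otherwise. -/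
/-!
Gaussian integration by parts, `E[ξ p(ξ)] = E[p'(ξ)]`, together with the recursion
`H_{n+1} = X H_n - H_n'` gives `E[H_n(ξ) q(ξ)] = E[q⁽ⁿ⁾(ξ)]` for every polynomial `q`.
Since `H_{n+1}' = (n+1) H_n`, taking `q = H_b H_c` and expanding `(H_b H_c)⁽ᵃ⁾` by Leibniz' rule
reduces the triple product to the orthogonality relations `E[H_m H_n] = δ_{mn} m!`. Only the
Leibniz term in which `H_b` is differentiated `(a + b - c) / 2` times survives, and it equals
`a! b! c! / (i! j! k!)` once `a = i + j`, `b = i + k`, `c = j + k`.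
-/

open MeasureTheory ProbabilityTheory Polynomial
open scoped NNReal Nat

section GaussianIntegrationByParts

variable {R : Type*} [CommRing R] [Algebra R ℝ] {μ : ℝ} {v : ℝ≥0}

lemma integrable_aeval_gaussianReal (p : R[X]) :
    Integrable (fun x ↦ aeval x p) (gaussianReal μ v) := by
  simp_rw [aeval_eq_sum_range, Algebra.smul_def]
  exact integrable_finsetSum _ fun i _ ↦
    (integrable_pow_of_mem_interior_integrableExpSet (by simp) i).const_mul _

lemma integrable_sub_mul_aeval_gaussianReal (p : R[X]) :
    Integrable (fun x ↦ (x - μ) * aeval x p) (gaussianReal μ v) := by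
  have hX : Integrable (fun x ↦ x * aeval x p) (gaussianReal μ v) := by
    have h := integrable_aeval_gaussianReal (μ := μ) (v := v) (X * p)
    simp only [map_mul, aeval_X] at h
    exact h
  refine (hX.sub ((integrable_aeval_gaussianReal p).const_mul μ)).congr (ae_of_all _ fun x ↦ ?_)
  simp only [Pi.sub_apply]
  ring

lemma integrable_mul_gaussianPDFReal {f : ℝ → ℝ} (hv : v ≠ 0)
    (hf : Integrable f (gaussianReal μ v)) :
    Integrable (fun x ↦ f x * gaussianPDFReal μ v x) := by
  rw [gaussianReal_of_var_ne_zero _ hv, integrable_withDensity_iff_integrable_smul'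
    (measurable_gaussianPDF μ v) (ae_of_all _ fun _ ↦ ENNReal.ofReal_lt_top)] at hf
  simpa [toReal_gaussianPDF, mul_comm] using hf

lemma hasDerivAt_gaussianPDFReal (hv : v ≠ 0) (x : ℝ) :
    HasDerivAt (gaussianPDFReal μ v) (-(x - μ) / v * gaussianPDFReal μ v x) x := by
  have hexponent : HasDerivAt (fun y ↦ -(y - μ) ^ 2 / (2 * v)) (-(x - μ) / v) x :=
    ((((hasDerivAt_id' x).sub_const μ).fun_pow 2).neg.div_const (2 * (v : ℝ))).congr_deriv
      (by field_simp; ring)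
  exact (hexponent.exp.const_mul (√(2 * Real.pi * v))⁻¹).congr_deriv
    (by rw [gaussianPDFReal]; ring)

/-- Stein's identity for polynomial test functions. -/
theorem integral_sub_mul_aeval_gaussianReal (p : R[X]) :
    ∫ x, (x - μ) * aeval x p ∂gaussianReal μ v =
      v * ∫ x, aeval x (derivative p) ∂gaussianReal μ v := by
  rcases eq_or_ne v 0 with rfl | hv
  · simp [gaussianReal_zero_var]
  have ibp := integral_mul_deriv_eq_deriv_mul_of_integrable
    (fun x _ ↦ p.hasDerivAt_aeval x) (fun x _ ↦ hasDerivAt_gaussianPDFReal (μ := μ) (v := v) hv x)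
    (((integrable_mul_gaussianPDFReal hv (integrable_sub_mul_aeval_gaussianReal (μ := μ) p)).const_mul
      (-(v : ℝ)⁻¹)).congr (ae_of_all _ fun x ↦ by simp only [Pi.mul_apply]; field_simp))
    (integrable_mul_gaussianPDFReal hv (integrable_aeval_gaussianReal _))
    (integrable_mul_gaussianPDFReal hv (integrable_aeval_gaussianReal _))
  calc ∫ x, (x - μ) * aeval x p ∂gaussianReal μ v
      = -v * ∫ x, aeval x p * (-(x - μ) / v * gaussianPDFReal μ v x) := by
        rw [integral_gaussianReal_eq_integral_smul hv, ← integral_const_mul]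
        congr 1 with x
        field_simp
        ring
    _ = v * ∫ x, aeval x (derivative p) ∂gaussianReal μ v := by
        rw [ibp, integral_gaussianReal_eq_integral_smul hv]
        simp_rw [smul_eq_mul, mul_comm (gaussianPDFReal μ v _)]
        ring

end GaussianIntegrationByParts

theorem derivative_hermite_succ (n : ℕ) :
    derivative (hermite (n + 1)) = (n + 1) • hermite n := by
  induction n with
  | zero => simp
  | succ n ih =>
    rw [hermite_succ (n + 1), derivative_sub, derivative_mul, derivative_X, ih, derivative_smul,
      hermite_succ n, mul_smul_comm, one_mul]
    module

theorem iterate_derivative_hermite (n k : ℕ) :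
    derivative^[k] (hermite n) = n.descFactorial k • hermite (n - k) := by
  induction k with
  | zero => simp
  | succ k ih =>
    rw [Function.iterate_succ_apply', ih, derivative_smul, Nat.descFactorial_succ, mul_smul]
    rcases hnk : n - k with _ | m
    · simp [hermite_zero]
    · rw [derivative_hermite_succ, show n - (k + 1) = m by omega, smul_comm]

noncomputable def stdGaussianExpectation : ℤ[X] →+ ℝ where
  toFun p := ∫ x, aeval x p ∂gaussianReal 0 1
  map_zero' := by simp
  map_add' p q := by
    simp only [map_add]
    exact integral_add (integrable_aeval_gaussianReal p) (integrable_aeval_gaussianReal q)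

lemma stdGaussianExpectation_apply (p : ℤ[X]) :
    stdGaussianExpectation p = ∫ x, aeval x p ∂gaussianReal 0 1 := rfl

lemma stdGaussianExpectation_X_mul_sub_derivative (p : ℤ[X]) :
    stdGaussianExpectation (X * p - derivative p) = 0 := by
  have h := integral_sub_mul_aeval_gaussianReal (μ := 0) (v := 1) p
  simp only [sub_zero, NNReal.coe_one, one_mul] at h
  simp only [map_sub, stdGaussianExpectation_apply, map_mul, aeval_X, h, sub_self]

theorem stdGaussianExpectation_hermite_mul (n : ℕ) (q : ℤ[X]) :
    stdGaussianExpectation (hermite n * q) = stdGaussianExpectation (derivative^[n] q) := by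
  induction n generalizing q with
  | zero => simp
  | succ n ih =>
    have h : hermite (n + 1) * q =
        (X * (hermite n * q) - derivative (hermite n * q)) + hermite n * derivative q := by
      rw [hermite_succ, derivative_mul]
      ring
    rw [h, map_add, stdGaussianExpectation_X_mul_sub_derivative, zero_add, ih,
      Function.iterate_succ_apply]

lemma stdGaussianExpectation_hermite (n : ℕ) :
    stdGaussianExpectation (hermite n) = if n = 0 then 1 else 0 := by
  have h := stdGaussianExpectation_hermite_mul n 1
  rw [mul_one] at h
  rcases Nat.eq_zero_or_pos n with rfl | hn
  · simp [stdGaussianExpectation_apply]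
  · rw [h, iterate_derivative_one hn, map_zero, if_neg hn.ne']

theorem stdGaussianExpectation_hermite_mul_hermite (m n : ℕ) :
    stdGaussianExpectation (hermite m * hermite n) = if m = n then (m ! : ℝ) else 0 := by
  rw [stdGaussianExpectation_hermite_mul, iterate_derivative_hermite, map_nsmul,
    stdGaussianExpectation_hermite, nsmul_eq_mul]
  rcases lt_trichotomy m n with h | rfl | h
  · simp [h.ne, Nat.sub_ne_zero_of_lt h]
  · simp [Nat.descFactorial_self]
  · simp [h.ne', Nat.descFactorial_eq_zero_iff_lt.2 h]

theorem stdGaussianExpectation_hermite_mul_hermite_mul_hermite (a b c : ℕ) :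
    stdGaussianExpectation (hermite a * hermite b * hermite c) =
      ∑ k ∈ Finset.range (a + 1), (a.choose k * b.descFactorial (a - k) * c.descFactorial k : ℝ) *
        if b - (a - k) = c - k then ((b - (a - k))! : ℝ) else 0 := by
  rw [mul_assoc, stdGaussianExpectation_hermite_mul, iterate_derivative_mul, map_sum]
  refine Finset.sum_congr rfl fun k _ ↦ ?_
  rw [iterate_derivative_hermite, iterate_derivative_hermite, smul_mul_smul_comm, ← mul_smul,
    map_nsmul, stdGaussianExpectation_hermite_mul_hermite, nsmul_eq_mul]
  push_cast
  ring

theorem add_choose_mul_descFactorial_mul_descFactorial_mul_factorial (i j k : ℕ) :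
    ((i + j).choose j * (i + k).descFactorial i * (j + k).descFactorial j * k ! : ℝ) =
      (i + j)! * (i + k)! * (j + k)! / (i ! * j ! * k !) := by
  have hij : ((i + j).choose j * i ! * j ! : ℝ) = (i + j)! := by
    exact_mod_cast Nat.add_choose_mul_factorial_mul_factorial i j
  have hik : ((i + k).descFactorial i * k ! : ℝ) = (i + k)! := by
    rw [mul_comm]
    exact_mod_cast by simpa using Nat.factorial_mul_descFactorial (Nat.le_add_right i k)
  have hjk : ((j + k).descFactorial j * k ! : ℝ) = (j + k)! := by
    rw [mul_comm]
    exact_mod_cast by simpa using Nat.factorial_mul_descFactorial (Nat.le_add_right j k)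
  rw [eq_div_iff (by positivity), ← hij, ← hik, ← hjk]
  ring

theorem sum_range_choose_mul_descFactorial_mul_descFactorial (a b c : ℕ) :
    ∑ k ∈ Finset.range (a + 1), (a.choose k * b.descFactorial (a - k) * c.descFactorial k : ℝ) *
        (if b - (a - k) = c - k then ((b - (a - k))! : ℝ) else 0) =
      if Even (a + b + c) ∧ c ≤ a + b ∧ a ≤ b + c ∧ b ≤ a + c then
        (a ! * b ! * c ! : ℝ) / (((a + b - c) / 2)! * ((a + c - b) / 2)! * ((b + c - a) / 2)!)
      else 0 := by
  -- Where a subtraction truncates, one of the descending factorials vanishes.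
  have hterm : ∀ k, ¬(a - k ≤ b ∧ k ≤ c ∧ b + k = c + (a - k)) →
      (a.choose k * b.descFactorial (a - k) * c.descFactorial k : ℝ) *
        (if b - (a - k) = c - k then ((b - (a - k))! : ℝ) else 0) = 0 := fun k hk ↦ by
    by_cases hb : b < a - k
    · simp [Nat.descFactorial_eq_zero_iff_lt.2 hb]
    by_cases hc : c < k
    · simp [Nat.descFactorial_eq_zero_iff_lt.2 hc]
    rw [if_neg (by omega), mul_zero]
  split_ifs with hcomplete
  · obtain ⟨heven, hc, ha, hb⟩ := hcomplete
    rw [Nat.even_iff] at heven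
    obtain ⟨i, j, k, rfl, rfl, rfl⟩ : ∃ i j k, a = i + j ∧ b = i + k ∧ c = j + k :=
      ⟨(a + b - c) / 2, (a + c - b) / 2, (b + c - a) / 2, by omega, by omega, by omega⟩
    rw [Finset.sum_eq_single j (fun l _ hl ↦ hterm l (by omega))
      (fun hj ↦ absurd (Finset.mem_range.2 (by omega)) hj)]
    rw [show i + j - j = i by omega, show i + k - i = k by omega, show j + k - j = k by omega,
      if_pos rfl, show (i + j + (i + k) - (j + k)) / 2 = i by omega,
      show (i + j + (j + k) - (i + k)) / 2 = j by omega,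
      show (i + k + (j + k) - (i + j)) / 2 = k by omega,
      add_choose_mul_descFactorial_mul_descFactorial_mul_factorial]
  · refine Finset.sum_eq_zero fun k hk ↦ hterm k fun ⟨hb, hc, hbc⟩ ↦ hcomplete ?_
    rw [Finset.mem_range] at hk
    exact ⟨Nat.even_iff.2 (by omega), by omega, by omega, by omega⟩

/-- For ξ standard Gaussian and probabilists' Hermite polynomials H_n,
E[H_a(ξ)H_b(ξ)H_c(ξ)] = a!b!c! / (((a+b-c)/2)! ((a-b+c)/2)! ((-a+b+c)/2)!) if
a+b+c is even and |a-b| ≤ c ≤ a+b, and 0 otherwise. -/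
theorem stmt3 (a b c : ℕ) :
    (∫ x, (Polynomial.aeval x (Polynomial.hermite a)) *
          (Polynomial.aeval x (Polynomial.hermite b)) *
          (Polynomial.aeval x (Polynomial.hermite c)) ∂(gaussianReal 0 1) : ℝ) =
      if Even (a + b + c) ∧ c ≤ a + b ∧ a ≤ b + c ∧ b ≤ a + c then
        (a.factorial * b.factorial * c.factorial : ℝ) /
          ((((a + b - c) / 2).factorial : ℝ) * (((a + c - b) / 2).factorial : ℝ) *
            (((b + c - a) / 2).factorial : ℝ))
      else 0 := by
  have hexpectation : (∫ x, aeval x (hermite a) * aeval x (hermite b) * aeval x (hermite c)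
      ∂gaussianReal 0 1 : ℝ) = stdGaussianExpectation (hermite a * hermite b * hermite c) := by
    simp only [stdGaussianExpectation_apply, map_mul]
  rw [hexpectation, stdGaussianExpectation_hermite_mul_hermite_mul_hermite,
    sum_range_choose_mul_descFactorial_mul_descFactorial]
end

section
/- Let û₀(y)² = (1+|y|²)^{-γ} with γ > 1/2, and F_n(t) = (t^n/n!) ∫_ℝ |y|^{2n} e^{-y²t} (1+|y|²)^{-γ} dy for fixed t > 0. Then there exist constants 0 < c ≤ C (depending on t and γ) such that c · n^{-(1+2γ)/2} ≤ F_n(t) ≤ C · n^{-(1+2γ)/2} for all sufficiently large n. -/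
open Real Set MeasureTheory

-- log-convexity multiplicative form
lemma gamma_interp {x y a b : ℝ} (hx : 0 < x) (hy : 0 < y) (ha : 0 ≤ a) (hb : 0 ≤ b)
    (hab : a + b = 1) : Real.Gamma (a * x + b * y) ≤ Real.Gamma x ^ a * Real.Gamma y ^ b := by
  have h := Real.convexOn_log_Gamma.2 (mem_Ioi.mpr hx) (mem_Ioi.mpr hy) ha hb hab
  simp only [Function.comp, smul_eq_mul] at h
  have hxy : 0 < a * x + b * y := by
    rcases eq_or_lt_of_le ha with h1 | h1
    · have : b = 1 := by linarith
      simpa [← h1, this] using hy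
    · nlinarith
  have h1 : Real.Gamma (a * x + b * y) = Real.exp (Real.log (Real.Gamma (a * x + b * y))) :=
    (Real.exp_log (Real.Gamma_pos_of_pos hxy)).symm
  rw [h1]
  calc Real.exp (Real.log (Real.Gamma (a * x + b * y)))
      ≤ Real.exp (a * Real.log (Real.Gamma x) + b * Real.log (Real.Gamma y)) := Real.exp_le_exp.mpr h
    _ = Real.Gamma x ^ a * Real.Gamma y ^ b := by
        rw [Real.exp_add, Real.rpow_def_of_pos (Real.Gamma_pos_of_pos hx),
          Real.rpow_def_of_pos (Real.Gamma_pos_of_pos hy), mul_comm (Real.log _) a,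
          mul_comm (Real.log _) b]

lemma gautschi_upper {x s : ℝ} (hx : 0 < x) (hs0 : 0 ≤ s) (hs1 : s ≤ 1) :
    Real.Gamma (x + s) ≤ Real.Gamma x * x ^ s := by
  have key := gamma_interp hx (by linarith : (0:ℝ) < x + 1) (by linarith : (0:ℝ) ≤ 1 - s) hs0
    (by ring)
  have e : (1 - s) * x + s * (x + 1) = x + s := by ring
  rw [e] at key
  calc Real.Gamma (x + s) ≤ Real.Gamma x ^ (1 - s) * Real.Gamma (x + 1) ^ s := key
    _ = Real.Gamma x * x ^ s := by
        rw [Real.Gamma_add_one hx.ne', Real.mul_rpow hx.le (Real.Gamma_pos_of_pos hx).le,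
          ← mul_assoc, mul_comm (Real.Gamma x ^ (1-s)) (x ^ s), mul_assoc, mul_comm (x^s),
          ← Real.rpow_add (Real.Gamma_pos_of_pos hx)]
        have h1 : 1 - s + s = 1 := by ring
        rw [h1, Real.rpow_one]

lemma gautschi_lower {x s : ℝ} (hx : 1 ≤ x) (hs0 : 0 ≤ s) (hs1 : s ≤ 1) :
    Real.Gamma x * x ^ s / 2 ≤ Real.Gamma (x + s) := by
  have hx0 : (0:ℝ) < x := by linarith
  have hxs : (0:ℝ) < x + s := by linarith
  have key := gamma_interp hxs (by linarith : (0:ℝ) < x + s + 1) hs0 (by linarith : (0:ℝ) ≤ 1 - s)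
    (by ring)
  have e : s * (x + s) + (1 - s) * (x + s + 1) = x + 1 := by ring
  rw [e] at key
  -- key : Γ(x+1) ≤ Γ(x+s)^s * Γ(x+s+1)^(1-s) = Γ(x+s) * (x+s)^(1-s)
  have key2 : Real.Gamma (x + 1) ≤ Real.Gamma (x + s) * (x + s) ^ (1 - s) := by
    calc Real.Gamma (x+1) ≤ Real.Gamma (x+s) ^ s * Real.Gamma (x+s+1) ^ (1-s) := key
      _ = Real.Gamma (x+s) * (x+s) ^ (1-s) := by
          rw [Real.Gamma_add_one hxs.ne', Real.mul_rpow hxs.le (Real.Gamma_pos_of_pos hxs).le]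
          have h1 : Real.Gamma (x+s) ^ s * Real.Gamma (x+s) ^ (1-s) = Real.Gamma (x+s) := by
            rw [← Real.rpow_add (Real.Gamma_pos_of_pos hxs)]
            norm_num
          calc Real.Gamma (x+s) ^ s * ((x+s) ^ (1-s) * Real.Gamma (x+s) ^ (1-s))
              = Real.Gamma (x+s) ^ s * Real.Gamma (x+s) ^ (1-s) * (x+s) ^ (1-s) := by ring
            _ = Real.Gamma (x+s) * (x+s) ^ (1-s) := by rw [h1]
  rw [Real.Gamma_add_one hx0.ne'] at key2
  -- so Γ(x+s) ≥ x Γ x / (x+s)^(1-s) ≥ x Γx (2x)^(s-1) = Γx x^s 2^(s-1) ≥ Γx x^s / 2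
  have h2x : x + s ≤ 2 * x := by linarith
  have hp : (x + s) ^ (1 - s) ≤ (2*x) ^ (1 - s) :=
    Real.rpow_le_rpow hxs.le h2x (by linarith)
  have hpos : (0:ℝ) < (x + s) ^ (1 - s) := Real.rpow_pos_of_pos hxs _
  have h3 : x * Real.Gamma x / (2*x) ^ (1-s) ≤ Real.Gamma (x+s) := by
    rw [div_le_iff₀ (Real.rpow_pos_of_pos (by linarith) _)]
    calc x * Real.Gamma x ≤ Real.Gamma (x+s) * (x+s)^(1-s) := key2
      _ ≤ Real.Gamma (x+s) * (2*x)^(1-s) := by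
          exact mul_le_mul_of_nonneg_left hp (Real.Gamma_pos_of_pos hxs).le
  refine le_trans ?_ h3
  rw [Real.mul_rpow (by norm_num) hx0.le, div_le_div_iff₀ (by norm_num)
    (by positivity)]
  have h2s : (2:ℝ) ^ (1 - s) ≤ 2 := by
    calc (2:ℝ) ^ (1-s) ≤ 2 ^ (1:ℝ) := Real.rpow_le_rpow_of_exponent_le (by norm_num) (by linarith)
      _ = 2 := Real.rpow_one 2
  have hxx : x ^ s * x ^ (1 - s) = x := by
    rw [← Real.rpow_add hx0]; simp
  calc Real.Gamma x * x ^ s * (2 ^ (1-s) * x ^ (1-s))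
      ≤ Real.Gamma x * x ^ s * (2 * x ^ (1-s)) := by
        apply mul_le_mul_of_nonneg_left (mul_le_mul_of_nonneg_right h2s (by positivity))
        positivity
    _ = Real.Gamma x * (x ^ s * x ^ (1-s)) * 2 := by ring
    _ = x * Real.Gamma x * 2 := by rw [hxx]; ring

lemma Gamma_add_nat {x : ℝ} (hx : 0 < x) (m : ℕ) :
    Real.Gamma (x + m) = Real.Gamma x * ∏ j ∈ Finset.range m, (x + j) := by
  induction m with
  | zero => simp
  | succ k ih =>
      have hxk : (0:ℝ) < x + k := by positivity
      have e : x + (k + 1 : ℕ) = (x + k) + 1 := by push_cast; ring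
      rw [e, Real.Gamma_add_one hxk.ne', ih, Finset.prod_range_succ]
      ring

lemma gamma_ratio_bounds (a : ℝ) (ha : 0 ≤ a) : ∃ K : ℝ, 0 < K ∧ ∀ x : ℝ, 1 ≤ x → a ≤ x →
    Real.Gamma x * x ^ a / K ≤ Real.Gamma (x + a) ∧
      Real.Gamma (x + a) ≤ K * (Real.Gamma x * x ^ a) := by
  set m : ℕ := ⌊a⌋₊ with hm
  set s : ℝ := a - m with hs
  have hs0 : 0 ≤ s := by
    have := Nat.floor_le ha
    simp only [hs]; linarith
  have hs1 : s ≤ 1 := by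
    have := (Nat.lt_floor_add_one a).le
    simp only [hs]; linarith
  refine ⟨2 ^ (m + 1), by positivity, fun x hx1 hax => ?_⟩
  have hx0 : (0:ℝ) < x := by linarith
  have hxs : (0:ℝ) < x + s := by linarith
  have hsm : x + a = (x + s) + m := by simp only [hs]; ring
  have hprod : Real.Gamma (x + a) = Real.Gamma (x + s) * ∏ j ∈ Finset.range m, (x + s + j) := by
    rw [hsm, Gamma_add_nat hxs m]
  have hxa : x ^ a = x ^ s * x ^ m := by
    rw [← Real.rpow_natCast x m, ← Real.rpow_add hx0]
    congr 1
    simp only [hs]; ring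
  have hfac_le : ∀ j ∈ Finset.range m, x + s + (j:ℝ) ≤ 2 * x := by
    intro j hj
    have hj' : (j:ℝ) ≤ (m:ℝ) - 1 := by
      have := Finset.mem_range.mp hj
      have : (j:ℝ) + 1 ≤ (m:ℝ) := by exact_mod_cast this
      linarith
    have hma : (m:ℝ) ≤ a := Nat.floor_le ha
    have hsj : s + (j:ℝ) ≤ a - 1 := by
      simp only [hs]; linarith
    linarith
  have hfac_ge : ∀ j ∈ Finset.range m, x ≤ x + s + (j:ℝ) := by
    intro j _
    have : (0:ℝ) ≤ (j:ℝ) := Nat.cast_nonneg j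
    linarith
  have hprod_le : (∏ j ∈ Finset.range m, (x + s + (j:ℝ))) ≤ (2*x) ^ m := by
    calc (∏ j ∈ Finset.range m, (x + s + (j:ℝ))) ≤ ∏ _j ∈ Finset.range m, (2*x) := by
          apply Finset.prod_le_prod
          · intro j _; positivity
          · exact hfac_le
      _ = (2*x) ^ m := by rw [Finset.prod_const, Finset.card_range]
  have hprod_ge : x ^ m ≤ ∏ j ∈ Finset.range m, (x + s + (j:ℝ)) := by
    calc x ^ m = ∏ _j ∈ Finset.range m, x := by rw [Finset.prod_const, Finset.card_range]
      _ ≤ ∏ j ∈ Finset.range m, (x + s + (j:ℝ)) := by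
          apply Finset.prod_le_prod
          · intro j _; positivity
          · exact hfac_ge
  have hG := Real.Gamma_pos_of_pos hx0
  constructor
  · -- lower bound
    have h1 : Real.Gamma x * x ^ s / 2 * x ^ m ≤ Real.Gamma (x + a) := by
      rw [hprod]
      exact mul_le_mul (gautschi_lower hx1 hs0 hs1) hprod_ge (by positivity)
        (Real.Gamma_pos_of_pos hxs).le
    have h2 : Real.Gamma x * x ^ a / (2 ^ (m+1)) ≤ Real.Gamma x * x ^ s / 2 * x ^ m := by
      rw [hxa]
      have hle : (2:ℝ) ≤ 2 ^ (m+1) := by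
        calc (2:ℝ) = 2^1 := (pow_one 2).symm
          _ ≤ 2 ^ (m+1) := pow_le_pow_right₀ (by norm_num) (by omega)
      calc Real.Gamma x * (x ^ s * x ^ m) / 2 ^ (m+1)
          ≤ Real.Gamma x * (x ^ s * x ^ m) / 2 := by
            apply div_le_div_of_nonneg_left (by positivity) (by norm_num) hle
        _ = Real.Gamma x * x ^ s / 2 * x ^ m := by ring
    linarith
  · -- upper bound
    have h1 : Real.Gamma (x + a) ≤ Real.Gamma x * x ^ s * (2*x) ^ m := by
      rw [hprod]
      exact mul_le_mul (gautschi_upper hx0 hs0 hs1) hprod_le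
        (le_trans (by positivity) hprod_ge) (by positivity)
    have h2 : Real.Gamma x * x ^ s * (2*x) ^ m ≤ 2 ^ (m+1) * (Real.Gamma x * x ^ a) := by
      rw [hxa, mul_pow]
      have hle : (2:ℝ)^m ≤ 2 ^ (m+1) := pow_le_pow_right₀ (by norm_num) (by omega)
      calc Real.Gamma x * x ^ s * (2^m * x ^ m) = 2^m * (Real.Gamma x * (x ^ s * x ^ m)) := by ring
        _ ≤ 2^(m+1) * (Real.Gamma x * (x ^ s * x ^ m)) := by
            apply mul_le_mul_of_nonneg_right hle (by positivity)
    linarith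

lemma G_bounds (a : ℝ) (ha : 1 ≤ a) : ∃ k₁ k₂ : ℝ, 0 < k₁ ∧ 0 < k₂ ∧ ∃ N : ℕ, ∀ n : ℕ, N ≤ n →
    k₁ * (n:ℝ) ^ (-a) ≤ Real.Gamma ((n:ℝ) + 1 - a) / n.factorial ∧
      Real.Gamma ((n:ℝ) + 1 - a) / n.factorial ≤ k₂ * (n:ℝ) ^ (-a) := by
  have ha0 : (0:ℝ) ≤ a := by linarith
  obtain ⟨K, hK, hKb⟩ := gamma_ratio_bounds a ha0
  refine ⟨2 ^ (-a) / K, K * 2 ^ a, by positivity, by positivity, ⌈2 * a⌉₊ + 1, fun n hn => ?_⟩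
  have hn2a : 2 * a ≤ (n:ℝ) := by
    calc 2 * a ≤ (⌈2*a⌉₊ : ℝ) := Nat.le_ceil _
      _ ≤ (n:ℝ) := by exact_mod_cast le_trans (Nat.le_succ _) hn
  set x : ℝ := (n:ℝ) + 1 - a with hxdef
  have hn0 : (0:ℝ) < (n:ℝ) := by linarith
  have hx1 : 1 ≤ x := by simp only [hxdef]; linarith
  have hax : a ≤ x := by simp only [hxdef]; linarith
  have hx0 : (0:ℝ) < x := by linarith
  have hxa : x + a = (n:ℝ) + 1 := by simp only [hxdef]; ring
  have hfac : Real.Gamma (x + a) = (n.factorial : ℝ) := by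
    rw [hxa]; exact_mod_cast Real.Gamma_nat_eq_factorial n
  obtain ⟨hlow, hup⟩ := hKb x hx1 hax
  rw [hfac] at hlow hup
  have hG := Real.Gamma_pos_of_pos hx0
  have hfacpos : (0:ℝ) < (n.factorial : ℝ) := by exact_mod_cast n.factorial_pos
  have hxinv : x ^ (-a) * x ^ a = 1 := by
    rw [← Real.rpow_add hx0]; simp
  -- central two-sided bound in terms of x
  have hcup : Real.Gamma x / n.factorial ≤ K * x ^ (-a) := by
    rw [div_le_iff₀ hfacpos]
    have he : K * x ^ (-a) * (Real.Gamma x * x ^ a / K) = Real.Gamma x * (x ^ (-a) * x ^ a) := by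
      field_simp
    calc Real.Gamma x = K * x ^ (-a) * (Real.Gamma x * x ^ a / K) := by
          rw [he, hxinv, mul_one]
      _ ≤ K * x ^ (-a) * (n.factorial : ℝ) := by
          apply mul_le_mul_of_nonneg_left hlow (by positivity)
  have hclow : (1 / K) * x ^ (-a) ≤ Real.Gamma x / n.factorial := by
    rw [le_div_iff₀ hfacpos]
    calc 1 / K * x ^ (-a) * (n.factorial:ℝ) ≤ 1 / K * x ^ (-a) * (K * (Real.Gamma x * x ^ a)) :=
          mul_le_mul_of_nonneg_left hup (by positivity)
      _ = Real.Gamma x * (x ^ (-a) * x ^ a) := by field_simp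
      _ = Real.Gamma x := by rw [hxinv, mul_one]
  -- compare x^(-a) with n^(-a)
  have hxn2 : (n:ℝ) / 2 ≤ x := by simp only [hxdef]; linarith
  have hx2n : x ≤ 2 * (n:ℝ) := by simp only [hxdef]; linarith
  have hup2 : x ^ (-a) ≤ 2 ^ a * (n:ℝ) ^ (-a) := by
    have h1 : x ^ (-a) ≤ ((n:ℝ)/2) ^ (-a) :=
      Real.rpow_le_rpow_of_nonpos (by linarith) hxn2 (by linarith)
    calc x ^ (-a) ≤ ((n:ℝ)/2) ^ (-a) := h1
      _ = (n:ℝ) ^ (-a) / 2 ^ (-a) := Real.div_rpow hn0.le (by norm_num) (-a)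
      _ = 2 ^ a * (n:ℝ) ^ (-a) := by
          rw [Real.rpow_neg (by norm_num : (0:ℝ) ≤ 2)]
          have : (2:ℝ) ^ a ≠ 0 := by positivity
          field_simp
  have hlow2 : 2 ^ (-a) * (n:ℝ) ^ (-a) ≤ x ^ (-a) := by
    have h1 : (2 * (n:ℝ)) ^ (-a) ≤ x ^ (-a) :=
      Real.rpow_le_rpow_of_nonpos hx0 hx2n (by linarith)
    calc 2 ^ (-a) * (n:ℝ) ^ (-a) = (2 * (n:ℝ)) ^ (-a) :=
          (Real.mul_rpow (by norm_num) hn0.le).symm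
      _ ≤ x ^ (-a) := h1
  constructor
  · calc 2 ^ (-a) / K * (n:ℝ) ^ (-a) = 1 / K * (2 ^ (-a) * (n:ℝ) ^ (-a)) := by ring
      _ ≤ 1 / K * x ^ (-a) := by
          apply mul_le_mul_of_nonneg_left hlow2 (by positivity)
      _ ≤ Real.Gamma x / n.factorial := hclow
  · calc Real.Gamma x / n.factorial ≤ K * x ^ (-a) := hcup
      _ ≤ K * (2 ^ a * (n:ℝ) ^ (-a)) := mul_le_mul_of_nonneg_left hup2 hK.le
      _ = K * 2 ^ a * (n:ℝ) ^ (-a) := by ring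

section integrals
variable {γ t : ℝ} (hγ : 1/2 < γ) (ht : 0 < t)

-- pointwise upper bound on Ioi 0
include hγ in
lemma pw_upper (n : ℕ) {y : ℝ} (hy : 0 < y) :
    y ^ (2*n) * Real.exp (-(y^2)*t) * (1 + y^2) ^ (-γ) ≤
      y ^ (2*(n:ℝ) - 2*γ) * Real.exp (-(y^2)*t) := by
  have hy2 : (0:ℝ) < y^2 := by positivity
  have h1 : (1 + y^2 : ℝ) ^ (-γ) ≤ (y^2 : ℝ) ^ (-γ) :=
    Real.rpow_le_rpow_of_nonpos hy2 (by linarith) (by linarith)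
  have h2 : (y^2 : ℝ) ^ (-γ) = y ^ (-(2*γ)) := by
    rw [← Real.rpow_natCast y 2, ← Real.rpow_mul hy.le]
    norm_num
  have h3 : y ^ (2*n) * y ^ (-(2*γ)) = y ^ (2*(n:ℝ) - 2*γ) := by
    rw [← Real.rpow_natCast y (2*n), ← Real.rpow_add hy]
    push_cast
    ring_nf
  calc y ^ (2*n) * Real.exp (-(y^2)*t) * (1 + y^2) ^ (-γ)
      ≤ y ^ (2*n) * Real.exp (-(y^2)*t) * (y^2) ^ (-γ) := by
        apply mul_le_mul_of_nonneg_left h1 (by positivity)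
    _ = y ^ (2*(n:ℝ) - 2*γ) * Real.exp (-(y^2)*t) := by rw [h2, ← h3]; ring

-- pointwise lower bound on Ioi 1
include hγ in
lemma pw_lower (n : ℕ) {y : ℝ} (hy : 1 < y) :
    2 ^ (-γ) * (y ^ (2*(n:ℝ) - 2*γ) * Real.exp (-(y^2)*t)) ≤
      y ^ (2*n) * Real.exp (-(y^2)*t) * (1 + y^2) ^ (-γ) := by
  have hy0 : (0:ℝ) < y := by linarith
  have hy2 : (0:ℝ) < y^2 := by positivity
  have h1 : (2 * y^2 : ℝ) ^ (-γ) ≤ (1 + y^2 : ℝ) ^ (-γ) := by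
    apply Real.rpow_le_rpow_of_nonpos (by positivity) (by nlinarith) (by linarith)
  have h2 : (2 * y^2 : ℝ) ^ (-γ) = 2 ^ (-γ) * y ^ (-(2*γ)) := by
    rw [Real.mul_rpow (by norm_num) hy2.le, ← Real.rpow_natCast y 2, ← Real.rpow_mul hy0.le]
    norm_num
  have h3 : y ^ (2*n) * y ^ (-(2*γ)) = y ^ (2*(n:ℝ) - 2*γ) := by
    rw [← Real.rpow_natCast y (2*n), ← Real.rpow_add hy0]
    push_cast
    ring_nf
  calc 2 ^ (-γ) * (y ^ (2*(n:ℝ) - 2*γ) * Real.exp (-(y^2)*t))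
      = y ^ (2*n) * Real.exp (-(y^2)*t) * (2 ^ (-γ) * y ^ (-(2*γ))) := by
        rw [← h3]; ring
    _ = y ^ (2*n) * Real.exp (-(y^2)*t) * (2 * y^2) ^ (-γ) := by rw [h2]
    _ ≤ y ^ (2*n) * Real.exp (-(y^2)*t) * (1 + y^2) ^ (-γ) := by
        apply mul_le_mul_of_nonneg_left h1 (by positivity)

include ht in
lemma int_h (n : ℕ) (hn : -1 < 2*(n:ℝ) - 2*γ) :
    MeasureTheory.IntegrableOn (fun y : ℝ => y ^ (2*(n:ℝ) - 2*γ) * Real.exp (-(y^2)*t))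
      (Set.Ioi 0) := by
  have := integrableOn_rpow_mul_exp_neg_mul_sq ht hn
  refine this.congr_fun (fun y _ => ?_) measurableSet_Ioi
  congr 1
  ring_nf

include hγ ht in
lemma int_g (n : ℕ) (hn : -1 < 2*(n:ℝ) - 2*γ) :
    MeasureTheory.IntegrableOn
      (fun y : ℝ => y ^ (2*n) * Real.exp (-(y^2)*t) * (1 + y^2) ^ (-γ)) (Set.Ioi 0) := by
  apply MeasureTheory.Integrable.mono (int_h ht n hn)
  · apply ContinuousOn.aestronglyMeasurable _ measurableSet_Ioi
    apply ContinuousOn.mul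
    apply ContinuousOn.mul
    · exact (continuous_pow _).continuousOn
    · exact (Real.continuous_exp.comp (by continuity)).continuousOn
    · intro y hy
      apply ContinuousAt.continuousWithinAt
      apply ContinuousAt.rpow_const (by fun_prop)
      left
      have : (0:ℝ) < y := hy
      positivity
  · rw [MeasureTheory.ae_restrict_iff' measurableSet_Ioi]
    filter_upwards with y
    intro hy
    have hy0 : (0:ℝ) < y := hy
    rw [Real.norm_eq_abs, Real.norm_eq_abs, abs_of_nonneg (by positivity),
      abs_of_nonneg (by positivity)]
    exact pw_upper hγ n hy0

end integrals

section integrals2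
open MeasureTheory
variable {γ t : ℝ} (hγ : 1/2 < γ) (ht : 0 < t)

include ht in
lemma val_Q (n : ℕ) (hn : -1 < 2*(n:ℝ) - 2*γ) :
    ∫ y in Set.Ioi (0:ℝ), y ^ (2*(n:ℝ) - 2*γ) * Real.exp (-(y^2)*t)
      = t ^ (-((n:ℝ) + 1/2 - γ)) * (1/2) * Real.Gamma ((n:ℝ) + 1/2 - γ) := by
  have h := integral_rpow_mul_exp_neg_mul_rpow (p := 2) (q := 2*(n:ℝ)-2*γ) (b := t)
    two_pos hn ht
  have e1 : Set.EqOn (fun y : ℝ => y ^ (2*(n:ℝ)-2*γ) * Real.exp (-(y^2)*t))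
      (fun y : ℝ => y ^ (2*(n:ℝ)-2*γ) * Real.exp (-t * y ^ (2:ℝ))) (Set.Ioi 0) := by
    intro y hy
    have hy0 : (0:ℝ) < y := hy
    have : y ^ (2:ℝ) = y ^ 2 := by
      rw [← Real.rpow_natCast y 2]; norm_num
    simp only [this]
    congr 1
    ring
  rw [MeasureTheory.setIntegral_congr_fun measurableSet_Ioi e1, h]
  have e2 : -(2*(n:ℝ)-2*γ+1)/2 = -((n:ℝ)+1/2-γ) := by ring
  have e3 : (2*(n:ℝ)-2*γ+1)/2 = (n:ℝ)+1/2-γ := by ring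
  rw [e2, e3]

include ht in
lemma R_le_one (n : ℕ) (hn : 0 ≤ 2*(n:ℝ) - 2*γ) :
    ∫ y in Set.Ioc (0:ℝ) 1, y ^ (2*(n:ℝ) - 2*γ) * Real.exp (-(y^2)*t) ≤ 1 := by
  set q : ℝ := 2*(n:ℝ) - 2*γ with hq
  have hq1 : (-1:ℝ) < q := by linarith
  have hint : IntegrableOn (fun y : ℝ => y ^ q) (Set.Ioc 0 1) := by
    have h1 : IntervalIntegrable (fun y : ℝ => y ^ q) volume 0 1 :=
      intervalIntegral.intervalIntegrable_rpow' hq1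
    rwa [intervalIntegrable_iff_integrableOn_Ioc_of_le zero_le_one] at h1
  have hintl : IntegrableOn (fun y : ℝ => y ^ q * Real.exp (-(y^2)*t)) (Set.Ioc 0 1) :=
    (int_h ht n hq1).mono_set Set.Ioc_subset_Ioi_self
  have hmono : (∫ y in Set.Ioc (0:ℝ) 1, y ^ q * Real.exp (-(y^2)*t))
      ≤ ∫ y in Set.Ioc (0:ℝ) 1, y ^ q := by
    apply setIntegral_mono_on hintl hint measurableSet_Ioc
    intro y hy
    have hy0 : (0:ℝ) < y := hy.1
    have : Real.exp (-(y^2)*t) ≤ 1 := by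
      rw [Real.exp_le_one_iff]
      nlinarith
    calc y ^ q * Real.exp (-(y^2)*t) ≤ y ^ q * 1 :=
          mul_le_mul_of_nonneg_left this (Real.rpow_nonneg hy0.le q)
      _ = y ^ q := mul_one _
  have hval : (∫ y in Set.Ioc (0:ℝ) 1, y ^ q) = 1/(q+1) := by
    rw [← intervalIntegral.integral_of_le zero_le_one, integral_rpow (Or.inl hq1),
      Real.one_rpow, Real.zero_rpow (by linarith : q+1 ≠ 0)]
    norm_num
  have : (1:ℝ)/(q+1) ≤ 1 := by
    rw [div_le_one (by linarith)]
    linarith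
  linarith

include ht in
lemma split_int (n : ℕ) (hn : -1 < 2*(n:ℝ) - 2*γ) :
    (∫ y in Set.Ioi (1:ℝ), y ^ (2*(n:ℝ) - 2*γ) * Real.exp (-(y^2)*t))
      = (∫ y in Set.Ioi (0:ℝ), y ^ (2*(n:ℝ) - 2*γ) * Real.exp (-(y^2)*t))
        - ∫ y in Set.Ioc (0:ℝ) 1, y ^ (2*(n:ℝ) - 2*γ) * Real.exp (-(y^2)*t) := by
  have hu : Set.Ioc (0:ℝ) 1 ∪ Set.Ioi 1 = Set.Ioi 0 := Set.Ioc_union_Ioi_eq_Ioi zero_le_one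
  have hd : Disjoint (Set.Ioc (0:ℝ) 1) (Set.Ioi 1) := Set.Ioc_disjoint_Ioi le_rfl
  have h := MeasureTheory.setIntegral_union hd measurableSet_Ioi
    ((int_h ht n hn).mono_set Set.Ioc_subset_Ioi_self)
    ((int_h ht n hn).mono_set (Set.Ioi_subset_Ioi zero_le_one))
  rw [hu] at h
  linarith

include hγ ht in
lemma lower_est (n : ℕ) (hn : -1 < 2*(n:ℝ) - 2*γ) :
    2 ^ (-γ) * (∫ y in Set.Ioi (1:ℝ), y ^ (2*(n:ℝ) - 2*γ) * Real.exp (-(y^2)*t))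
      ≤ ∫ y in Set.Ioi (0:ℝ), y ^ (2*n) * Real.exp (-(y^2)*t) * (1 + y^2) ^ (-γ) := by
  have h1 : 2 ^ (-γ) * (∫ y in Set.Ioi (1:ℝ), y ^ (2*(n:ℝ) - 2*γ) * Real.exp (-(y^2)*t))
      = ∫ y in Set.Ioi (1:ℝ), 2 ^ (-γ) * (y ^ (2*(n:ℝ) - 2*γ) * Real.exp (-(y^2)*t)) :=
    (MeasureTheory.integral_const_mul _ _).symm
  rw [h1]
  have h2 : (∫ y in Set.Ioi (1:ℝ), 2 ^ (-γ) * (y ^ (2*(n:ℝ) - 2*γ) * Real.exp (-(y^2)*t)))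
      ≤ ∫ y in Set.Ioi (1:ℝ), y ^ (2*n) * Real.exp (-(y^2)*t) * (1 + y^2) ^ (-γ) := by
    apply setIntegral_mono_on
    · exact (((int_h ht n hn).mono_set (Set.Ioi_subset_Ioi zero_le_one)).const_mul _)
    · exact (int_g hγ ht n hn).mono_set (Set.Ioi_subset_Ioi zero_le_one)
    · exact measurableSet_Ioi
    · intro y hy
      exact pw_lower hγ n hy
  have h3 : (∫ y in Set.Ioi (1:ℝ), y ^ (2*n) * Real.exp (-(y^2)*t) * (1 + y^2) ^ (-γ))
      ≤ ∫ y in Set.Ioi (0:ℝ), y ^ (2*n) * Real.exp (-(y^2)*t) * (1 + y^2) ^ (-γ) := by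
    apply setIntegral_mono_set (int_g hγ ht n hn)
    · filter_upwards [MeasureTheory.ae_restrict_mem measurableSet_Ioi] with y hy
      have hy0 : (0:ℝ) < y := hy
      simp only [Pi.zero_apply]
      positivity
    · exact (Set.Ioi_subset_Ioi zero_le_one).eventuallyLE
  linarith

include hγ ht in
lemma upper_est (n : ℕ) (hn : -1 < 2*(n:ℝ) - 2*γ) :
    (∫ y in Set.Ioi (0:ℝ), y ^ (2*n) * Real.exp (-(y^2)*t) * (1 + y^2) ^ (-γ))
      ≤ ∫ y in Set.Ioi (0:ℝ), y ^ (2*(n:ℝ) - 2*γ) * Real.exp (-(y^2)*t) := by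
  apply setIntegral_mono_on (int_g hγ ht n hn) (int_h ht n hn) measurableSet_Ioi
  intro y hy
  exact pw_upper hγ n hy

end integrals2

lemma vanish (a t : ℝ) (ha : 0 ≤ a) : Filter.Tendsto
    (fun n : ℕ => (n:ℝ) ^ a * (t ^ n / n.factorial)) Filter.atTop (nhds 0) := by
  set k : ℕ := ⌈a⌉₊ with hk
  have hg : Filter.Tendsto (fun n : ℕ => ((n:ℝ) ^ k / 2 ^ n) * ((2*|t|) ^ n / n.factorial))
      Filter.atTop (nhds 0) := by
    have := (tendsto_pow_const_div_const_pow_of_one_lt k one_lt_two).mul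
      (FloorSemiring.tendsto_pow_div_factorial_atTop (2*|t|))
    simpa using this
  apply squeeze_zero_norm' _ hg
  filter_upwards [Filter.eventually_ge_atTop 1] with n hn
  have hn1 : (1:ℝ) ≤ (n:ℝ) := by exact_mod_cast hn
  have hfA : ‖(n:ℝ) ^ a * (t ^ n / n.factorial)‖ = (n:ℝ) ^ a * (|t| ^ n / n.factorial) := by
    rw [norm_mul, Real.norm_eq_abs, Real.norm_eq_abs,
      abs_of_nonneg (Real.rpow_nonneg (by positivity) a), abs_div, abs_pow, Nat.abs_cast]
  rw [hfA]
  have hak : (n:ℝ) ^ a ≤ (n:ℝ) ^ (k:ℕ) := by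
    rw [← Real.rpow_natCast (n:ℝ) k]
    exact Real.rpow_le_rpow_of_exponent_le hn1 (Nat.le_ceil a)
  have he : ((n:ℝ) ^ k / 2 ^ n) * ((2*|t|) ^ n / n.factorial)
      = (n:ℝ) ^ k * (|t| ^ n / n.factorial) := by
    rw [mul_pow]
    have h2 : (2:ℝ) ^ n ≠ 0 := by positivity
    have hfac : ((n.factorial:ℝ)) ≠ 0 := by exact_mod_cast n.factorial_pos.ne'
    field_simp
  rw [he]
  apply mul_le_mul_of_nonneg_right hak (by positivity)

/-- For |û₀(y)|² = (1+y²)^{-γ} with γ > 1/2 and fixed t > 0, the chaos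
energies F_n(t) = (tⁿ/n!) ∫ |y|^{2n} e^{-y²t} (1+y²)^{-γ} dy satisfy
c n^{-(1+2γ)/2} ≤ F_n(t) ≤ C n^{-(1+2γ)/2} for all sufficiently large n,
for some constants 0 < c ≤ C depending on t and γ. -/
theorem stmt11 (γ t : ℝ) (hγ : 1 / 2 < γ) (ht : 0 < t) :
    ∃ c C : ℝ, 0 < c ∧ c ≤ C ∧ ∃ N : ℕ, ∀ n : ℕ, N ≤ n →
      c * (n : ℝ) ^ (-(1 + 2 * γ) / 2) ≤
        (t ^ n / n.factorial) *
          ∫ y : ℝ, |y| ^ (2 * n) * Real.exp (-(y ^ 2) * t) * (1 + y ^ 2) ^ (-γ) ∧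
      (t ^ n / n.factorial) *
          ∫ y : ℝ, |y| ^ (2 * n) * Real.exp (-(y ^ 2) * t) * (1 + y ^ 2) ^ (-γ) ≤
        C * (n : ℝ) ^ (-(1 + 2 * γ) / 2) := by
  set a : ℝ := γ + 1/2 with hadef
  have ha1 : 1 ≤ a := by simp only [hadef]; linarith
  obtain ⟨k₁, k₂, hk₁, hk₂, N₁, hGb⟩ := G_bounds a ha1
  set T : ℝ := t ^ (γ - 1/2) with hTdef
  have hTpos : 0 < T := Real.rpow_pos_of_pos ht _
  have h2γ : (0:ℝ) < 2 ^ (-γ) := Real.rpow_pos_of_pos two_pos _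
  set c : ℝ := 2 ^ (-γ) * T * k₁ / 2 with hcdef
  set C : ℝ := T * k₂ with hCdef
  have hcpos : 0 < c := by positivity
  have hCpos : 0 < C := by positivity
  have hev : ∀ᶠ n : ℕ in Filter.atTop,
      (n:ℝ) ^ a * (t ^ n / n.factorial) < 2 ^ (-γ) * T * k₁ / 4 :=
    (vanish a t (by linarith)).eventually (gt_mem_nhds (by positivity))
  obtain ⟨N₂, hN₂⟩ := Filter.eventually_atTop.mp hev
  refine ⟨min c C, max c C, lt_min hcpos hCpos,
    le_trans (min_le_left _ _) (le_max_left _ _), max (max N₁ N₂) (⌈γ⌉₊ + 1), fun n hn => ?_⟩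
  have hnN₁ : N₁ ≤ n := le_trans (le_trans (le_max_left _ _) (le_max_left _ _)) hn
  have hnN₂ : N₂ ≤ n := le_trans (le_trans (le_max_right _ _) (le_max_left _ _)) hn
  have hnγnat : ⌈γ⌉₊ + 1 ≤ n := le_trans (le_max_right _ _) hn
  have hnγ : γ + 1 ≤ (n:ℝ) := by
    have h1 : γ ≤ (⌈γ⌉₊ : ℝ) := Nat.le_ceil γ
    have h2 : ((⌈γ⌉₊ : ℕ) : ℝ) + 1 ≤ (n:ℝ) := by exact_mod_cast hnγnat
    linarith
  have hq : (-1:ℝ) < 2*(n:ℝ) - 2*γ := by linarith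
  have hq0 : (0:ℝ) ≤ 2*(n:ℝ) - 2*γ := by linarith
  have hn0 : (0:ℝ) < (n:ℝ) := by linarith
  have hna : (0:ℝ) < (n:ℝ) ^ (-a) := Real.rpow_pos_of_pos hn0 _
  have hfacpos : (0:ℝ) < (n.factorial : ℝ) := by exact_mod_cast n.factorial_pos
  have hu : (0:ℝ) < t ^ n / n.factorial := by positivity
  set z : ℝ := (n:ℝ) + 1/2 - γ with hzdef
  have hz : (n:ℝ) + 1 - a = z := by simp only [hadef, hzdef]; ring
  -- notation for the three integrals
  set P : ℝ := ∫ y in Set.Ioi (0:ℝ), y ^ (2*n) * Real.exp (-(y^2)*t) * (1 + y^2) ^ (-γ)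
    with hPdef
  set Q : ℝ := ∫ y in Set.Ioi (0:ℝ), y ^ (2*(n:ℝ) - 2*γ) * Real.exp (-(y^2)*t) with hQdef
  set R : ℝ := ∫ y in Set.Ioc (0:ℝ) 1, y ^ (2*(n:ℝ) - 2*γ) * Real.exp (-(y^2)*t) with hRdef
  have habs : (∫ y : ℝ, |y| ^ (2*n) * Real.exp (-(y^2)*t) * (1 + y^2) ^ (-γ)) = 2 * P := by
    rw [hPdef, ← integral_comp_abs
      (f := fun y => y ^ (2*n) * Real.exp (-(y^2)*t) * (1 + y^2) ^ (-γ))]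
    simp only [sq_abs]
  have hQval : Q = t ^ (-z) * (1/2) * Real.Gamma z := val_Q ht n hq
  have hRle : R ≤ 1 := R_le_one ht n hq0
  have hRpos : 0 ≤ R := by
    rw [hRdef]
    apply MeasureTheory.setIntegral_nonneg measurableSet_Ioc
    intro y hy
    have hy0 : (0:ℝ) < y := hy.1
    positivity
  have hsplit := split_int ht n hq
  have hlow := lower_est hγ ht n hq
  have hup : P ≤ Q := upper_est hγ ht n hq
  obtain ⟨hG1, hG2⟩ := hGb n hnN₁
  rw [hz] at hG1 hG2
  -- key algebraic identity
  have hkey : (t ^ n / n.factorial) * (2 * Q) = T * (Real.Gamma z / n.factorial) := by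
    rw [hQval]
    have h1 : t ^ n * t ^ (-z) = T := by
      rw [hTdef, ← Real.rpow_natCast t n, ← Real.rpow_add ht]
      congr 1
      simp only [hzdef]
      ring
    calc (t ^ n / n.factorial) * (2 * (t ^ (-z) * (1/2) * Real.Gamma z))
        = (t ^ n * t ^ (-z)) * (Real.Gamma z / n.factorial) := by ring
      _ = T * (Real.Gamma z / n.factorial) := by rw [h1]
  -- exponent normalization
  have hexp : -(1 + 2*γ)/2 = -a := by simp only [hadef]; ring
  rw [habs, hexp]
  have hsmall : t ^ n / n.factorial < 2 ^ (-γ) * T * k₁ / 4 * (n:ℝ) ^ (-a) := by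
    have h1 := hN₂ n hnN₂
    have h2 : (n:ℝ) ^ (-a) * (n:ℝ) ^ a = 1 := by
      rw [← Real.rpow_add hn0]; simp
    calc t ^ n / n.factorial = (n:ℝ) ^ (-a) * ((n:ℝ) ^ a * (t ^ n / n.factorial)) := by
          rw [← mul_assoc, h2, one_mul]
      _ < (n:ℝ) ^ (-a) * (2 ^ (-γ) * T * k₁ / 4) := by
          exact mul_lt_mul_of_pos_left h1 hna
      _ = 2 ^ (-γ) * T * k₁ / 4 * (n:ℝ) ^ (-a) := by ring
  constructor
  · -- lower bound
    have hmain : 2 ^ (-γ) * (Q - R) ≤ P := by rw [← hsplit]; exact le_of_eq_of_le rfl hlow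
    have step1 : (t ^ n / n.factorial) * (2 * (2 ^ (-γ) * (Q - R)))
        ≤ (t ^ n / n.factorial) * (2 * P) := by
      apply mul_le_mul_of_nonneg_left _ hu.le
      linarith
    have step2 : (t ^ n / n.factorial) * (2 * (2 ^ (-γ) * (Q - R)))
        = 2 ^ (-γ) * ((t ^ n / n.factorial) * (2 * Q))
          - 2 ^ (-γ) * 2 * ((t ^ n / n.factorial) * R) := by ring
    have step3 : 2 ^ (-γ) * 2 * ((t ^ n / n.factorial) * R) ≤ 2 * (t ^ n / n.factorial) := by
      have h2g : (2:ℝ) ^ (-γ) ≤ 1 :=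
        Real.rpow_le_one_of_one_le_of_nonpos one_le_two (by linarith)
      have hRu : (t ^ n / n.factorial) * R ≤ (t ^ n / n.factorial) * 1 :=
        mul_le_mul_of_nonneg_left hRle hu.le
      calc 2 ^ (-γ) * 2 * ((t ^ n / n.factorial) * R)
          = 2 ^ (-γ) * (2 * ((t ^ n / n.factorial) * R)) := by ring
        _ ≤ 1 * (2 * ((t ^ n / n.factorial) * R)) := by
            apply mul_le_mul_of_nonneg_right h2g
            have := mul_nonneg hu.le hRpos
            linarith
        _ = 2 * ((t ^ n / n.factorial) * R) := one_mul _
        _ ≤ 2 * ((t ^ n / n.factorial) * 1) := by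
            apply mul_le_mul_of_nonneg_left hRu (by norm_num)
        _ = 2 * (t ^ n / n.factorial) := by ring
    have step4 : 2 ^ (-γ) * ((t ^ n / n.factorial) * (2 * Q))
        ≥ 2 ^ (-γ) * T * k₁ * (n:ℝ) ^ (-a) := by
      rw [hkey]
      have h4 : T * (k₁ * (n:ℝ) ^ (-a)) ≤ T * (Real.Gamma z / n.factorial) :=
        mul_le_mul_of_nonneg_left hG1 hTpos.le
      calc 2 ^ (-γ) * T * k₁ * (n:ℝ) ^ (-a) = 2 ^ (-γ) * (T * (k₁ * (n:ℝ) ^ (-a))) := by ring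
        _ ≤ 2 ^ (-γ) * (T * (Real.Gamma z / n.factorial)) :=
            mul_le_mul_of_nonneg_left h4 h2γ.le
    have step5 : 2 * (t ^ n / n.factorial) < 2 ^ (-γ) * T * k₁ / 2 * (n:ℝ) ^ (-a) := by
      linarith [hsmall]
    calc min c C * (n:ℝ) ^ (-a) ≤ c * (n:ℝ) ^ (-a) :=
          mul_le_mul_of_nonneg_right (min_le_left _ _) hna.le
      _ = 2 ^ (-γ) * T * k₁ * (n:ℝ) ^ (-a) - 2 ^ (-γ) * T * k₁ / 2 * (n:ℝ) ^ (-a) := by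
          rw [hcdef]; ring
      _ ≤ (t ^ n / n.factorial) * (2 * P) := by linarith
  · -- upper bound
    have step1 : (t ^ n / n.factorial) * (2 * P) ≤ (t ^ n / n.factorial) * (2 * Q) := by
      apply mul_le_mul_of_nonneg_left _ hu.le
      linarith
    calc (t ^ n / n.factorial) * (2 * P) ≤ T * (Real.Gamma z / n.factorial) := by
          rw [← hkey]; exact step1
      _ ≤ T * (k₂ * (n:ℝ) ^ (-a)) := mul_le_mul_of_nonneg_left hG2 hTpos.le
      _ = C * (n:ℝ) ^ (-a) := by rw [hCdef]; ring
      _ ≤ max c C * (n:ℝ) ^ (-a) :=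
          mul_le_mul_of_nonneg_right (le_max_right _ _) hna.le
end

section
/- Fix a sequence (a_n)_{n≥0} of nonnegative reals and let (u_n(t))_{n≥0} solve the triangular ODE system u_0(t) = a_0, u_n(t) = a_n + √n ∫_0^t u_{n-1}(s) ds. Then u_n(t) = ∑_{k=0}^n (√(n!)/√((n-k)! k!)) · (a_{n-k}/√(k!)) · t^k, and consequently ∑_{n≥0} u_n(1)² ≥ C ∑_{n≥0} e^{√n} a_n², where C > 0 is an absolute constant. -/
/-!
Iterating the integral equation shows that `u n` is a polynomial in `t` whose `k`-th coefficient
`c n k = √(n.choose k) · a (n - k) / √k!` gains the factor `√(n + 1) / (k + 1)` at each step.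
All `c n k` are nonnegative, so `u n 1 ^ 2 ≥ ∑ k, c n k ^ 2 = ∑ k, n.choose k / k! · a (n - k) ^ 2`.
Summing over `n` and regrouping by `m = n - k` gives `∑ m, a m ^ 2 · ∑ k, (m + k).choose k / k!`,
and `(m + k).choose k / k! ≥ m ^ k / (2k)!` termwise, so the inner sum is at least
`cosh √m ≥ exp √m / 2`.
-/

open Finset Real
open scoped Nat ENNReal

theorem ENNReal.tsum_sum_antidiagonal {A : Type*} [AddCommMonoid A] [HasAntidiagonal A]
    (f : A → A → ℝ≥0∞) : ∑' n, ∑ p ∈ antidiagonal n, f p.1 p.2 = ∑' m, ∑' k, f m k := by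
  rw [← ENNReal.tsum_prod, ← (HasAntidiagonal.sigmaAntidiagonalEquivProd (A := A)).tsum_eq,
    ENNReal.tsum_sigma']
  refine tsum_congr fun n => ?_
  exact (Finset.tsum_subtype (antidiagonal n) fun p => f p.1 p.2).symm

theorem pow_div_factorial_two_mul_le_choose_div_factorial (m k : ℕ) :
    (m : ℝ) ^ k / (2 * k)! ≤ (m + k).choose k / k ! := by
  have hfac : (k ! : ℝ) * k ! ≤ (2 * k)! := by
    exact_mod_cast Nat.le_of_dvd (2 * k).factorial_pos
      (by simpa [two_mul] using Nat.factorial_mul_factorial_dvd_factorial_add k k)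
  calc (m : ℝ) ^ k / (2 * k)! ≤ ((m + k + 1 - k : ℕ) : ℝ) ^ k / (k ! * k !) := by
        gcongr
        rw [Nat.add_right_comm, Nat.add_sub_cancel]; linarith
    _ = ((m + k + 1 - k : ℕ) : ℝ) ^ k / k ! / k ! := by rw [div_div]
    _ ≤ (m + k).choose k / k ! := by gcongr; exact Nat.pow_le_choose k (m + k)

theorem hasSum_pow_div_factorial_two_mul (x : ℝ) (hx : 0 ≤ x) :
    HasSum (fun k : ℕ => x ^ k / (2 * k)!) (cosh √x) := by
  simpa [pow_mul, sq_sqrt hx] using Real.hasSum_cosh √x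

theorem ofReal_exp_sqrt_div_two_le_tsum_choose_div_factorial (m : ℕ) :
    ENNReal.ofReal (exp √m / 2) ≤ ∑' k, ENNReal.ofReal ((m + k).choose k / k !) := by
  have hcosh := hasSum_pow_div_factorial_two_mul m m.cast_nonneg
  calc ENNReal.ofReal (exp √m / 2) ≤ ENNReal.ofReal (cosh √m) := by
        gcongr; rw [cosh_eq]; linarith [exp_pos (-√m)]
    _ = ∑' k : ℕ, ENNReal.ofReal ((m : ℝ) ^ k / (2 * k)!) := by
        rw [← hcosh.tsum_eq, ENNReal.ofReal_tsum_of_nonneg (fun k => by positivity) hcosh.summable]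
    _ ≤ ∑' k, ENNReal.ofReal ((m + k).choose k / k !) := by
        gcongr ∑' k, ENNReal.ofReal ?_ with k
        exact pow_div_factorial_two_mul_le_choose_div_factorial m k

theorem integral_sum_mul_pow (c : ℕ → ℝ) (N : ℕ) (t : ℝ) :
    ∫ s in (0 : ℝ)..t, ∑ k ∈ range N, c k * s ^ k =
      ∑ k ∈ range N, c k * (t ^ (k + 1) / (k + 1)) := by
  rw [intervalIntegral.integral_finsetSum (f := fun k s => c k * s ^ k)
    fun k _ => (continuous_const.mul (continuous_pow k)).intervalIntegrable 0 t]
  simp [integral_pow]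

noncomputable def chaosCoeff (a : ℕ → ℝ) (n k : ℕ) : ℝ :=
  √(n ! : ℝ) / √(((n - k)! : ℝ) * k !) * (a (n - k) / √(k ! : ℝ))

theorem chaosCoeff_zero_right (a : ℕ → ℝ) (n : ℕ) : chaosCoeff a n 0 = a n := by
  have : √(n ! : ℝ) ≠ 0 := by positivity
  simp [chaosCoeff, this]

theorem sqrt_succ_mul_chaosCoeff_div (a : ℕ → ℝ) (n k : ℕ) :
    √(n + 1 : ℝ) * (chaosCoeff a n k / (k + 1)) = chaosCoeff a (n + 1) (k + 1) := by
  simp only [chaosCoeff, Nat.add_sub_add_right, Nat.factorial_succ, Nat.cast_mul, Nat.cast_succ]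
  have hk1 : (0 : ℝ) ≤ k + 1 := by positivity
  rw [sqrt_mul (by positivity : (0 : ℝ) ≤ n + 1), mul_left_comm _ ((k : ℝ) + 1), sqrt_mul hk1,
    sqrt_mul hk1]
  set r := √(k + 1 : ℝ)
  have hr : (k : ℝ) + 1 = r * r := (mul_self_sqrt (by positivity)).symm
  have : r ≠ 0 := by positivity
  rw [hr]
  field_simp

theorem chaosCoeff_nonneg {a : ℕ → ℝ} (ha : ∀ n, 0 ≤ a n) (n k : ℕ) : 0 ≤ chaosCoeff a n k := by
  unfold chaosCoeff; have := ha (n - k); positivity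

theorem chaosCoeff_sq (a : ℕ → ℝ) {n k : ℕ} (hk : k ≤ n) :
    chaosCoeff a n k ^ 2 = n.choose k / k ! * a (n - k) ^ 2 := by
  rw [chaosCoeff, Nat.cast_choose ℝ hk, mul_pow, div_pow, div_pow, sq_sqrt (by positivity),
    sq_sqrt (by positivity), sq_sqrt (by positivity)]
  ring

theorem eq_sum_chaosCoeff_mul_pow {a : ℕ → ℝ} {u : ℕ → ℝ → ℝ} (h0 : ∀ t, u 0 t = a 0)
    (hsucc : ∀ n t, u (n + 1) t = a (n + 1) + √(n + 1) * ∫ s in (0 : ℝ)..t, u n s)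
    (n : ℕ) (t : ℝ) : u n t = ∑ k ∈ range (n + 1), chaosCoeff a n k * t ^ k := by
  induction n generalizing t with
  | zero => simp [h0, chaosCoeff_zero_right]
  | succ n ih =>
    rw [hsucc, intervalIntegral.integral_congr fun s _ => ih s, integral_sum_mul_pow, mul_sum,
      sum_range_succ' _ (n + 1), chaosCoeff_zero_right, pow_zero, mul_one, add_comm]
    congr 1
    refine sum_congr rfl fun k _ => ?_
    rw [← sqrt_succ_mul_chaosCoeff_div]
    ring

theorem sum_choose_div_factorial_mul_sq_le {a : ℕ → ℝ} (ha : ∀ n, 0 ≤ a n) (n : ℕ) :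
    ∑ p ∈ antidiagonal n, (p.1 + p.2).choose p.2 / p.2 ! * a p.1 ^ 2 ≤
      (∑ k ∈ range (n + 1), chaosCoeff a n k) ^ 2 := by
  calc ∑ p ∈ antidiagonal n, ((p.1 + p.2).choose p.2 / p.2 ! * a p.1 ^ 2 : ℝ)
      = ∑ k ∈ range (n + 1), chaosCoeff a n k ^ 2 := by
        rw [← Nat.sum_antidiagonal_swap, Nat.sum_antidiagonal_eq_sum_range_succ_mk]
        refine sum_congr rfl fun k hk => ?_
        have hk : k ≤ n := Nat.lt_succ_iff.mp (mem_range.mp hk)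
        simp only [Prod.swap_prod_mk, Nat.sub_add_cancel hk, chaosCoeff_sq a hk]
    _ ≤ _ := sum_sq_le_sq_sum_of_nonneg fun k _ => chaosCoeff_nonneg ha n k

/-- There is an absolute constant C > 0 such that for every sequence
(a_n) of nonnegative reals and every solution (u_n) of the triangular system
u_0(t) = a_0, u_n(t) = a_n + √n ∫_0^t u_{n-1}(s) ds, one has the explicit formula
u_n(t) = ∑_{k=0}^n (√(n!)/√((n-k)! k!)) (a_{n-k}/√(k!)) tᵏ, and
∑_{n≥0} u_n(1)² ≥ C ∑_{n≥0} e^{√n} a_n² (stated in [0,∞] so both sides may be infinite). -/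
theorem stmt13 :
    ∃ C : ℝ, 0 < C ∧
      ∀ (a : ℕ → ℝ) (u : ℕ → ℝ → ℝ),
        (∀ n, 0 ≤ a n) →
        (∀ t : ℝ, u 0 t = a 0) →
        (∀ n : ℕ, ∀ t : ℝ, u (n + 1) t =
          a (n + 1) + Real.sqrt (n + 1) * ∫ s in (0:ℝ)..t, u n s) →
        (∀ n : ℕ, ∀ t : ℝ, u n t =
          ∑ k ∈ Finset.range (n + 1),
            (Real.sqrt n.factorial /
              Real.sqrt (((n - k).factorial : ℝ) * (k.factorial : ℝ))) *
              (a (n - k) / Real.sqrt k.factorial) * t ^ k) ∧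
        ENNReal.ofReal C *
            (∑' n : ℕ, ENNReal.ofReal (Real.exp (Real.sqrt n) * (a n) ^ 2)) ≤
          ∑' n : ℕ, ENNReal.ofReal ((u n 1) ^ 2) := by
  refine ⟨1 / 2, by norm_num, fun a u ha h0 hsucc => ⟨eq_sum_chaosCoeff_mul_pow h0 hsucc, ?_⟩⟩
  have hu : ∀ n, u n 1 = ∑ k ∈ range (n + 1), chaosCoeff a n k := fun n => by
    simp [eq_sum_chaosCoeff_mul_pow h0 hsucc n 1]
  have hdiag (m : ℕ) : ENNReal.ofReal (exp √m / 2 * a m ^ 2) ≤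
      ∑' k, ENNReal.ofReal ((m + k).choose k / k ! * a m ^ 2) := by
    simp_rw [ENNReal.ofReal_mul' (sq_nonneg (a m)), ENNReal.tsum_mul_right]
    gcongr
    exact ofReal_exp_sqrt_div_two_le_tsum_choose_div_factorial m
  calc ENNReal.ofReal (1 / 2) * ∑' n : ℕ, ENNReal.ofReal (exp √n * a n ^ 2)
      = ∑' m : ℕ, ENNReal.ofReal (exp √m / 2 * a m ^ 2) := by
        rw [← ENNReal.tsum_mul_left]
        refine tsum_congr fun m => ?_
        rw [← ENNReal.ofReal_mul (by norm_num)]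
        ring_nf
    _ ≤ ∑' m : ℕ, ∑' k, ENNReal.ofReal ((m + k).choose k / k ! * a m ^ 2) :=
        ENNReal.tsum_le_tsum hdiag
    _ = ∑' n, ∑ p ∈ antidiagonal n,
          ENNReal.ofReal ((p.1 + p.2).choose p.2 / p.2 ! * a p.1 ^ 2) :=
        (ENNReal.tsum_sum_antidiagonal _).symm
    _ ≤ ∑' n : ℕ, ENNReal.ofReal (u n 1 ^ 2) := by
        gcongr with n
        rw [← ENNReal.ofReal_sum_of_nonneg fun p _ => by positivity, hu]
        exact ENNReal.ofReal_le_ofReal (sum_choose_div_factorial_mul_sq_le ha n)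
end

section
/- Suppose C_φ(n) ≤ Cⁿ (n!)^γ for some C > 0 and 0 ≤ γ < 1. Then for every t > 0 the series ∑_{k≥0} t^k C_φ(k)/k! converges; if C_φ(n) ≤ Cⁿ n!, the series converges precisely for t < 1/C; and if C_φ(n) ≥ cⁿ (n!)^{1+ρ} with ρ > 0, c > 0, then for every δ > 0 and t > 0 the weighted series ∑_{k≥0} δ^{2k} t^k C_φ(k)/k! diverges. -/
/-! For every `ε > 0` the sequence `(k!)^ε` eventually dominates every geometric sequence `x^k`,
since `k!` dominates `(|x|^(1/ε))^k`. With `ε = 1 - γ` this bounds the terms of the series by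
`(1/2)^k` eventually; with `ε = ρ` it keeps the terms of the weighted series above `1`, so they do
not tend to `0`. The middle case is a plain comparison with the geometric series of ratio `t C`. -/

open Filter Nat

theorem eventually_pow_le_factorial (x : ℝ) : ∀ᶠ k : ℕ in atTop, x ^ k ≤ k ! := by
  filter_upwards [(FloorSemiring.tendsto_pow_div_factorial_atTop x).eventually
    (gt_mem_nhds one_pos)] with k hk
  exact ((div_lt_one (by positivity)).mp hk).le

theorem eventually_pow_le_factorial_rpow (x : ℝ) {ε : ℝ} (hε : 0 < ε) :
    ∀ᶠ k : ℕ in atTop, x ^ k ≤ (k ! : ℝ) ^ ε := by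
  set y := |x| ^ ε⁻¹
  have hy : 0 ≤ y := by positivity
  filter_upwards [eventually_pow_le_factorial y] with k hk
  calc x ^ k ≤ |x| ^ k := (le_abs_self _).trans (abs_pow x k).le
    _ = (y ^ k) ^ ε := by
      rw [← Real.rpow_natCast, ← Real.rpow_natCast, ← Real.rpow_mul hy, mul_comm,
        Real.rpow_mul hy, ← Real.rpow_mul (abs_nonneg x), inv_mul_cancel₀ hε.ne', Real.rpow_one]
    _ ≤ (k ! : ℝ) ^ ε := by gcongr

theorem summable_pow_div_factorial_rpow (x : ℝ) {ε : ℝ} (hε : 0 < ε) :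
    Summable (fun k : ℕ => x ^ k / (k ! : ℝ) ^ ε) := by
  refine Summable.of_norm_bounded_eventually_nat
    (summable_geometric_of_lt_one (by norm_num : (0 : ℝ) ≤ 1 / 2) (by norm_num)) ?_
  filter_upwards [eventually_pow_le_factorial_rpow (2 * |x|) hε] with k hk
  have hfac : 0 < (k ! : ℝ) ^ ε := by positivity
  rw [norm_div, norm_pow, Real.norm_eq_abs, Real.norm_of_nonneg hfac.le, div_le_iff₀ hfac]
  calc |x| ^ k = (1 / 2) ^ k * (2 * |x|) ^ k := by rw [← mul_pow]; ring
    _ ≤ (1 / 2) ^ k * (k ! : ℝ) ^ ε := by gcongr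

theorem eventually_one_le_pow_mul_factorial_rpow {q : ℝ} (hq : 0 < q) {ρ : ℝ} (hρ : 0 < ρ) :
    ∀ᶠ k : ℕ in atTop, 1 ≤ q ^ k * (k ! : ℝ) ^ ρ := by
  filter_upwards [eventually_pow_le_factorial_rpow q⁻¹ hρ] with k hk
  rwa [inv_pow, inv_le_iff_one_le_mul₀' (by positivity)] at hk

theorem not_summable_of_eventually_one_le {f : ℕ → ℝ} (h : ∀ᶠ k in atTop, 1 ≤ f k) :
    ¬ Summable f := fun hf =>
  have ⟨_, hle, hlt⟩ := (h.and (hf.tendsto_atTop_zero.eventually (gt_mem_nhds one_pos))).exists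
  hle.not_gt hlt

section

variable {a : ℕ → ℝ}

theorem summable_pow_mul_div_factorial_of_le_rpow (ha : ∀ n, 0 ≤ a n) {C γ : ℝ} (hγ : γ < 1)
    (hbound : ∀ n, a n ≤ C ^ n * (n ! : ℝ) ^ γ) {t : ℝ} (ht : 0 ≤ t) :
    Summable (fun k : ℕ => t ^ k * a k / k !) := by
  refine (summable_pow_div_factorial_rpow (t * C) (sub_pos.mpr hγ)).of_nonneg_of_le
    (fun k => by have := ha k; positivity) (fun k => ?_)
  have hfac : (0 : ℝ) < k ! := by positivity
  calc t ^ k * a k / k ! ≤ t ^ k * (C ^ k * (k ! : ℝ) ^ γ) / k ! := by gcongr; exact hbound k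
    _ = (t * C) ^ k / (k ! : ℝ) ^ (1 - γ) := by
      rw [Real.rpow_sub hfac, Real.rpow_one, mul_pow]
      field_simp

theorem summable_pow_mul_div_factorial_of_le_factorial (ha : ∀ n, 0 ≤ a n) {C : ℝ} (hC : 0 ≤ C)
    (hbound : ∀ n, a n ≤ C ^ n * n !) {t : ℝ} (ht : 0 ≤ t) (htC : t * C < 1) :
    Summable (fun k : ℕ => t ^ k * a k / k !) := by
  refine (summable_geometric_of_lt_one (by positivity) htC).of_nonneg_of_le
    (fun k => by have := ha k; positivity) (fun k => ?_)
  calc t ^ k * a k / k ! ≤ t ^ k * (C ^ k * k !) / k ! := by gcongr; exact hbound k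
    _ = (t * C) ^ k := by rw [mul_pow]; field_simp

theorem not_summable_pow_mul_div_factorial_of_rpow_le {ρ c : ℝ} (hρ : 0 < ρ) (hc : 0 < c)
    (hbound : ∀ n, c ^ n * (n ! : ℝ) ^ (1 + ρ) ≤ a n) {s : ℝ} (hs : 0 < s) :
    ¬ Summable (fun k : ℕ => s ^ k * a k / k !) := by
  refine not_summable_of_eventually_one_le ?_
  filter_upwards [eventually_one_le_pow_mul_factorial_rpow (mul_pos hs hc) hρ] with k hk
  have hfac : (0 : ℝ) < k ! := by positivity
  calc 1 ≤ (s * c) ^ k * (k ! : ℝ) ^ ρ := hk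
    _ = s ^ k * (c ^ k * (k ! : ℝ) ^ (1 + ρ)) / k ! := by
      rw [Real.rpow_add hfac, Real.rpow_one, mul_pow]
      field_simp
    _ ≤ s ^ k * a k / k ! := by gcongr; exact hbound k

end

/-- Let C_φ(n) ≥ 0.
(a) If C_φ(n) ≤ Cⁿ(n!)^γ with C > 0, 0 ≤ γ < 1, then ∑_k tᵏ C_φ(k)/k! converges for
every t > 0.
(b) If C_φ(n) ≤ Cⁿ n!, the series converges for (precisely the guaranteed range)
0 < t < 1/C.
(c) If C_φ(n) ≥ cⁿ(n!)^{1+ρ} with ρ > 0, c > 0, then for every δ > 0, t > 0 the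
weighted series ∑_k δ^{2k} tᵏ C_φ(k)/k! diverges. -/
theorem stmt15 (Cφ : ℕ → ℝ) (hpos : ∀ n, 0 ≤ Cφ n) :
    (∀ C γ : ℝ, 0 < C → 0 ≤ γ → γ < 1 →
      (∀ n : ℕ, Cφ n ≤ C ^ n * ((n.factorial : ℝ)) ^ γ) →
      ∀ t : ℝ, 0 < t → Summable (fun k : ℕ => t ^ k * Cφ k / k.factorial)) ∧
    (∀ C : ℝ, 0 < C →
      (∀ n : ℕ, Cφ n ≤ C ^ n * (n.factorial : ℝ)) →
      ∀ t : ℝ, 0 < t → t < 1 / C →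
        Summable (fun k : ℕ => t ^ k * Cφ k / k.factorial)) ∧
    (∀ ρ c : ℝ, 0 < ρ → 0 < c →
      (∀ n : ℕ, c ^ n * ((n.factorial : ℝ)) ^ (1 + ρ) ≤ Cφ n) →
      ∀ δ t : ℝ, 0 < δ → 0 < t →
        ¬ Summable (fun k : ℕ => δ ^ (2 * k) * t ^ k * Cφ k / k.factorial)) := by
  refine ⟨fun C γ _ _ hγ hbound t ht => ?_, fun C hC hbound t ht htC => ?_,
    fun ρ c hρ hc hbound δ t hδ ht => ?_⟩
  · exact summable_pow_mul_div_factorial_of_le_rpow hpos hγ hbound ht.le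
  · exact summable_pow_mul_div_factorial_of_le_factorial hpos hC.le hbound ht.le
      ((lt_div_iff₀ hC).mp htC)
  · have hweight : ∀ k : ℕ, δ ^ (2 * k) * t ^ k = (δ ^ 2 * t) ^ k := fun k => by
      rw [pow_mul, mul_pow]
    simp only [hweight]
    exact not_summable_pow_mul_div_factorial_of_rpow_le hρ hc hbound (by positivity)
end
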